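/- arXiv:1103.2288 — 7 statements merged into one kernel-verified Lean document; each statement's English description precedes it below -/
import Mathlib

section
/- The sequence W →(d⁰) V →(d¹) Q →(d²) X → 0 is exact, i.e. the image of d⁰ equals the kernel of d¹, the image of d¹ equals the kernel of d², and d² is surjective. -/
/-!
The operator ∂̂ is bijective: it sends `u₀ + (z - 1) q` to `iκ₀ (u₀ + (z + 1) q)`, and every
polynomial of degree at most `N + 1` has exactly one such expansion around any point. Once ∂̂ is
invertible, exactness is formal. It uses only `(v^⊥)^⊥ = -v`, `(∇f)^⊥ = ∇^⊥f`,
`∇^⊥·(v^⊥) = ∇·v` and `∇^⊥·∇ = ∇·∇^⊥ = 0` (symmetry of second partial derivatives). A pair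
`(a, b)` in the kernel of d¹ is `d⁰ ((∂̂⁻¹ ⊗ id) a)`, a pair `(c, d)` in the kernel of d² is
`d¹ (0, -(∂̂⁻¹ ⊗ ⊥) d)`, and `(∂̂⁻¹ ⊗ id) x` already maps onto `x` under d².
-/

open TensorProduct

theorem MvPolynomial.pderiv_pderiv_comm {R σ : Type*} [CommSemiring R] (i j : σ)
    (f : MvPolynomial σ R) : pderiv i (pderiv j f) = pderiv j (pderiv i f) := by
  classical
  induction f using MvPolynomial.induction_on with
  | C a => simp
  | add p q hp hq => simp [hp, hq]
  | mul_X q n hq =>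
      simp only [pderiv_mul, map_add, hq, pderiv_X, Pi.single_apply]
      split_ifs <;> simp
      ring

namespace Polynomial

theorem exists_eq_C_eval_add_X_sub_C_mul {R : Type*} [CommRing R] [Nontrivial R] {n : ℕ}
    {f : R[X]} (hf : f.degree ≤ n + 1) (a : R) :
    ∃ q : R[X], q.degree ≤ n ∧ f = C (f.eval a) + (X - C a) * q := by
  refine ⟨f /ₘ (X - C a), ?_, ?_⟩
  · refine (degree_le_natDegree).trans ?_
    rw [natDegree_divByMonic f (monic_X_sub_C a), natDegree_X_sub_C]
    exact_mod_cast Nat.sub_le_of_le_add (natDegree_le_iff_degree_le.mpr hf)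
  · rw [← modByMonic_X_sub_C_eq_C_eval, modByMonic_add_div]

theorem C_add_X_sub_C_mul_mem_degreeLE {R : Type*} [CommRing R] {n : ℕ} (u a : R) {q : R[X]}
    (hq : q.degree ≤ n) : C u + (X - C a) * q ∈ degreeLE R (n + 1) := by
  rw [mem_degreeLE]
  refine (degree_add_le _ _).trans
    (max_le (degree_C_le.trans (by exact_mod_cast Nat.zero_le _)) ?_)
  calc ((X - C a) * q).degree ≤ (X - C a).degree + q.degree := degree_mul_le _ _
    _ ≤ 1 + n := add_le_add (degree_X_sub_C_le a) hq
    _ = n + 1 := add_comm _ _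

theorem bijective_of_apply_C_add_X_sub_C_mul {K : Type*} [Field K] {n : ℕ} {a b c : K}
    (hc : c ≠ 0) (D : degreeLE K (n + 1) →ₗ[K] degreeLE K (n + 1))
    (hD : ∀ (u : K) (q : K[X]), q.degree ≤ n → ∀ w : degreeLE K (n + 1),
      (w : K[X]) = C u + (X - C a) * q → (D w : K[X]) = c • (C u + (X - C b) * q)) :
    Function.Bijective D := by
  constructor
  · refine (injective_iff_map_eq_zero D).mpr fun w hDw => ?_
    obtain ⟨q, hq, hwq⟩ := exists_eq_C_eval_add_X_sub_C_mul (mem_degreeLE.mp w.2) a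
    have hzero := hD _ q hq w hwq
    rw [hDw, ZeroMemClass.coe_zero, eq_comm, smul_eq_zero, or_iff_right hc] at hzero
    have hu : (w : K[X]).eval a = 0 := by simpa using congrArg (eval b) hzero
    have hq0 : q = 0 := by simpa [hu, X_sub_C_ne_zero] using hzero
    ext1
    rw [hwq, hu, hq0]
    simp
  · intro t
    obtain ⟨q, hq, htq⟩ := exists_eq_C_eval_add_X_sub_C_mul
      ((degree_smul_le c⁻¹ (t : K[X])).trans (mem_degreeLE.mp t.2)) b
    refine ⟨⟨_, C_add_X_sub_C_mul_mem_degreeLE ((c⁻¹ • (t : K[X])).eval b) a hq⟩,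
      Subtype.ext ?_⟩
    rw [hD _ q hq _ rfl, ← htq, smul_smul, mul_inv_cancel₀ hc, one_smul]

end Polynomial

theorem TensorProduct.map_neg_right {R M M₂ N N₂ : Type*} [CommRing R] [AddCommGroup M]
    [Module R M] [AddCommGroup M₂] [Module R M₂] [AddCommGroup N] [Module R N] [AddCommGroup N₂]
    [Module R N₂] (f : M →ₗ[R] M₂) (g : N →ₗ[R] N₂) : map f (-g) = -map f g :=
  TensorProduct.ext' fun _ _ => by simp [tmul_neg]

section Exactness

variable {R A P V S : Type*} [CommRing R] [AddCommGroup A] [Module R A] [AddCommGroup P]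
  [Module R P] [AddCommGroup V] [Module R V] [AddCommGroup S] [Module R S]
  {D : A →ₗ[R] A} {grad gradperp : P →ₗ[R] V} {scurl divg : V →ₗ[R] S} {perp : V →ₗ[R] V}

theorem LinearMap.exists_inverse_of_bijective (hD : Function.Bijective D) :
    ∃ D' : A →ₗ[R] A, D' ∘ₗ D = LinearMap.id ∧ D ∘ₗ D' = LinearMap.id :=
  ⟨(LinearEquiv.ofBijective D hD).symm, (LinearEquiv.ofBijective D hD).symm_comp,
    (LinearEquiv.ofBijective D hD).comp_symm⟩

theorem TensorProduct.map_injective_of_comp_self_eq_neg_id (hD : Function.Bijective D)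
    (hperp : perp ∘ₗ perp = -LinearMap.id) : Function.Injective (map D perp) := by
  obtain ⟨D', hD', -⟩ := D.exists_inverse_of_bijective hD
  refine Function.LeftInverse.injective (g := map D' (-perp)) fun x => ?_
  rw [map_map, hD', LinearMap.neg_comp, hperp, neg_neg, map_id, LinearMap.id_apply]

theorem exact_d0_d1_of_bijective (hD : Function.Bijective D)
    (hperp : perp ∘ₗ perp = -LinearMap.id) (hperp_grad : perp ∘ₗ grad = gradperp)
    (hcurl_grad : scurl ∘ₗ grad = 0)
    (d0 : A ⊗[R] P →ₗ[R] (A ⊗[R] P) × (A ⊗[R] V))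
    (hd0 : ∀ w, d0 w = (map D LinearMap.id w, map LinearMap.id grad w))
    (d1 : (A ⊗[R] P) × (A ⊗[R] V) →ₗ[R] (A ⊗[R] S) × (A ⊗[R] V))
    (hd1 : ∀ a b, d1 (a, b) = (map LinearMap.id scurl b,
      -map LinearMap.id gradperp a + map D perp b)) :
    Function.Exact d0 d1 := by
  obtain ⟨D', hD', hD''⟩ := D.exists_inverse_of_bijective hD
  have hintertwine : ∀ w, map D perp (map LinearMap.id grad w)
      = map LinearMap.id gradperp (map D LinearMap.id w) := fun w => by
    simp only [map_map, LinearMap.comp_id, LinearMap.id_comp, hperp_grad]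
  rintro ⟨a, b⟩
  rw [hd1, Prod.mk_eq_zero, neg_add_eq_zero]
  constructor
  · rintro ⟨-, hab⟩
    refine ⟨map D' LinearMap.id a, ?_⟩
    have ha : map D LinearMap.id (map D' LinearMap.id a) = a := by
      rw [map_map, hD'', LinearMap.id_comp, map_id, LinearMap.id_apply]
    rw [hd0]
    refine Prod.ext ha (map_injective_of_comp_self_eq_neg_id hD hperp ?_)
    rw [hintertwine, ha, hab]
  · rintro ⟨w, hw⟩
    rw [hd0, Prod.mk.injEq] at hw
    rw [← hw.1, ← hw.2, hintertwine]
    simp [map_map, hcurl_grad]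

theorem exact_d1_d2_of_bijective (hD : Function.Bijective D)
    (hperp : perp ∘ₗ perp = -LinearMap.id) (hcurl_perp : scurl ∘ₗ perp = divg)
    (hdiv_gradperp : divg ∘ₗ gradperp = 0)
    (d1 : (A ⊗[R] P) × (A ⊗[R] V) →ₗ[R] (A ⊗[R] S) × (A ⊗[R] V))
    (hd1 : ∀ a b, d1 (a, b) = (map LinearMap.id scurl b,
      -map LinearMap.id gradperp a + map D perp b))
    (d2 : (A ⊗[R] S) × (A ⊗[R] V) →ₗ[R] A ⊗[R] S)
    (hd2 : ∀ c d, d2 (c, d) = map D LinearMap.id c + map LinearMap.id divg d) :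
    Function.Exact d1 d2 := by
  obtain ⟨D', hD', hD''⟩ := D.exists_inverse_of_bijective hD
  have hdiv_perp : divg ∘ₗ perp = -scurl := by
    rw [← hcurl_perp, LinearMap.comp_assoc, hperp, LinearMap.comp_neg, LinearMap.comp_id]
  rintro ⟨c, d⟩
  rw [hd2]
  constructor
  · intro hcd
    have hc : map D' divg d = -c := by
      simpa only [map_map, LinearMap.comp_id, LinearMap.id_comp, hD', map_neg, map_id,
        LinearMap.id_apply] using
        congrArg (map D' LinearMap.id) (eq_neg_of_add_eq_zero_right hcd)
    refine ⟨(0, -map D' perp d), ?_⟩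
    rw [hd1, map_zero, neg_zero, zero_add, map_neg, map_neg, map_map, map_map, LinearMap.id_comp,
      hcurl_perp, hc, hD'', hperp, map_neg_right, LinearMap.neg_apply, neg_neg, neg_neg, map_id,
      LinearMap.id_apply]
  · rintro ⟨⟨a, b⟩, hab⟩
    rw [hd1, Prod.mk.injEq] at hab
    rw [← hab.1, ← hab.2]
    simp only [map_add, map_neg, map_map, LinearMap.comp_id, LinearMap.id_comp, hdiv_gradperp,
      hdiv_perp, map_zero_right, map_neg_right, LinearMap.zero_apply, LinearMap.neg_apply,
      neg_zero, zero_add, add_neg_cancel]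

theorem surjective_d2_of_surjective (hD : Function.Surjective D)
    (d2 : (A ⊗[R] S) × (A ⊗[R] V) →ₗ[R] A ⊗[R] S)
    (hd2 : ∀ c d, d2 (c, d) = map D LinearMap.id c + map LinearMap.id divg d) :
    Function.Surjective d2 := by
  intro x
  obtain ⟨c, rfl⟩ := LinearMap.rTensor_surjective S hD x
  exact ⟨(c, 0), by rw [hd2, map_zero, add_zero]; rfl⟩

end Exactness

theorem stmt0_general (N p : ℕ) (κ₀ : ℂ) (hκ : κ₀ ≠ 0)
    -- the radial derivative operator ∂̂ on Π_{N+1}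
    (dhat : ↥(Polynomial.degreeLE ℂ (N + 1)) →ₗ[ℂ] ↥(Polynomial.degreeLE ℂ (N + 1)))
    (hdhat : ∀ (u₀ : ℂ) (q : Polynomial ℂ), q.degree ≤ (N : ℕ) →
      ∀ w : ↥(Polynomial.degreeLE ℂ (N + 1)),
        (w : Polynomial ℂ) = Polynomial.C u₀ + (Polynomial.X - 1) * q →
        (dhat w : Polynomial ℂ)
          = (Complex.I * κ₀) • (Polynomial.C u₀ + (Polynomial.X + 1) * q))
    -- the surface gradient ∇ : P^p → (P^{p-1})²
    (grad : ↥(MvPolynomial.restrictTotalDegree (Fin 2) ℂ p) →ₗ[ℂ]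
      ↥(MvPolynomial.restrictTotalDegree (Fin 2) ℂ (p - 1)) ×
        ↥(MvPolynomial.restrictTotalDegree (Fin 2) ℂ (p - 1)))
    (hgrad : ∀ f, ((grad f).1 : MvPolynomial (Fin 2) ℂ)
          = MvPolynomial.pderiv (0 : Fin 2) (f : MvPolynomial (Fin 2) ℂ) ∧
        ((grad f).2 : MvPolynomial (Fin 2) ℂ)
          = MvPolynomial.pderiv (1 : Fin 2) (f : MvPolynomial (Fin 2) ℂ))
    -- the rotated surface gradient ∇^⊥ : P^p → (P^{p-1})²
    (gradperp : ↥(MvPolynomial.restrictTotalDegree (Fin 2) ℂ p) →ₗ[ℂ]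
      ↥(MvPolynomial.restrictTotalDegree (Fin 2) ℂ (p - 1)) ×
        ↥(MvPolynomial.restrictTotalDegree (Fin 2) ℂ (p - 1)))
    (hgradperp : ∀ f, ((gradperp f).1 : MvPolynomial (Fin 2) ℂ)
          = -(MvPolynomial.pderiv (1 : Fin 2) (f : MvPolynomial (Fin 2) ℂ)) ∧
        ((gradperp f).2 : MvPolynomial (Fin 2) ℂ)
          = MvPolynomial.pderiv (0 : Fin 2) (f : MvPolynomial (Fin 2) ℂ))
    -- the scalar curl ∇^⊥· : (P^{p-1})² → P^{p-2}
    (scurl : (↥(MvPolynomial.restrictTotalDegree (Fin 2) ℂ (p - 1)) ×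
        ↥(MvPolynomial.restrictTotalDegree (Fin 2) ℂ (p - 1))) →ₗ[ℂ]
      ↥(MvPolynomial.restrictTotalDegree (Fin 2) ℂ (p - 2)))
    (hscurl : ∀ v, (scurl v : MvPolynomial (Fin 2) ℂ)
          = MvPolynomial.pderiv (0 : Fin 2) (v.2 : MvPolynomial (Fin 2) ℂ)
            - MvPolynomial.pderiv (1 : Fin 2) (v.1 : MvPolynomial (Fin 2) ℂ))
    -- the rotation v ↦ v^⊥ on (P^{p-1})²
    (perp : (↥(MvPolynomial.restrictTotalDegree (Fin 2) ℂ (p - 1)) ×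
        ↥(MvPolynomial.restrictTotalDegree (Fin 2) ℂ (p - 1))) →ₗ[ℂ]
      ↥(MvPolynomial.restrictTotalDegree (Fin 2) ℂ (p - 1)) ×
        ↥(MvPolynomial.restrictTotalDegree (Fin 2) ℂ (p - 1)))
    (hperp : ∀ v, perp v = (-v.2, v.1))
    -- the surface divergence ∇· : (P^{p-1})² → P^{p-2}
    (divg : (↥(MvPolynomial.restrictTotalDegree (Fin 2) ℂ (p - 1)) ×
        ↥(MvPolynomial.restrictTotalDegree (Fin 2) ℂ (p - 1))) →ₗ[ℂ]
      ↥(MvPolynomial.restrictTotalDegree (Fin 2) ℂ (p - 2)))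
    (hdivg : ∀ v, (divg v : MvPolynomial (Fin 2) ℂ)
          = MvPolynomial.pderiv (0 : Fin 2) (v.1 : MvPolynomial (Fin 2) ℂ)
            + MvPolynomial.pderiv (1 : Fin 2) (v.2 : MvPolynomial (Fin 2) ℂ))
    -- d⁰ : W → V, w ↦ ((∂̂ ⊗ id) w, (id ⊗ ∇) w)
    (d0 : (↥(Polynomial.degreeLE ℂ (N + 1)) ⊗[ℂ]
        ↥(MvPolynomial.restrictTotalDegree (Fin 2) ℂ p)) →ₗ[ℂ]
      (↥(Polynomial.degreeLE ℂ (N + 1)) ⊗[ℂ]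
        ↥(MvPolynomial.restrictTotalDegree (Fin 2) ℂ p)) ×
      (↥(Polynomial.degreeLE ℂ (N + 1)) ⊗[ℂ]
        (↥(MvPolynomial.restrictTotalDegree (Fin 2) ℂ (p - 1)) ×
          ↥(MvPolynomial.restrictTotalDegree (Fin 2) ℂ (p - 1)))))
    (hd0 : ∀ w, d0 w = (TensorProduct.map dhat LinearMap.id w,
      TensorProduct.map LinearMap.id grad w))
    -- d¹ : V → Q, (a,b) ↦ ((id ⊗ ∇^⊥·) b, −(id ⊗ ∇^⊥) a + (∂̂ ⊗ ⊥) b)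
    (d1 : ((↥(Polynomial.degreeLE ℂ (N + 1)) ⊗[ℂ]
        ↥(MvPolynomial.restrictTotalDegree (Fin 2) ℂ p)) ×
      (↥(Polynomial.degreeLE ℂ (N + 1)) ⊗[ℂ]
        (↥(MvPolynomial.restrictTotalDegree (Fin 2) ℂ (p - 1)) ×
          ↥(MvPolynomial.restrictTotalDegree (Fin 2) ℂ (p - 1))))) →ₗ[ℂ]
      ((↥(Polynomial.degreeLE ℂ (N + 1)) ⊗[ℂ]
        ↥(MvPolynomial.restrictTotalDegree (Fin 2) ℂ (p - 2))) ×
      (↥(Polynomial.degreeLE ℂ (N + 1)) ⊗[ℂ]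
        (↥(MvPolynomial.restrictTotalDegree (Fin 2) ℂ (p - 1)) ×
          ↥(MvPolynomial.restrictTotalDegree (Fin 2) ℂ (p - 1))))))
    (hd1 : ∀ a b, d1 (a, b) = (TensorProduct.map LinearMap.id scurl b,
      - TensorProduct.map LinearMap.id gradperp a + TensorProduct.map dhat perp b))
    -- d² : Q → X, (c,d) ↦ (∂̂ ⊗ id) c + (id ⊗ ∇·) d
    (d2 : ((↥(Polynomial.degreeLE ℂ (N + 1)) ⊗[ℂ]
        ↥(MvPolynomial.restrictTotalDegree (Fin 2) ℂ (p - 2))) ×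
      (↥(Polynomial.degreeLE ℂ (N + 1)) ⊗[ℂ]
        (↥(MvPolynomial.restrictTotalDegree (Fin 2) ℂ (p - 1)) ×
          ↥(MvPolynomial.restrictTotalDegree (Fin 2) ℂ (p - 1))))) →ₗ[ℂ]
      ↥(Polynomial.degreeLE ℂ (N + 1)) ⊗[ℂ]
        ↥(MvPolynomial.restrictTotalDegree (Fin 2) ℂ (p - 2)))
    (hd2 : ∀ c d, d2 (c, d) = TensorProduct.map dhat LinearMap.id c
      + TensorProduct.map LinearMap.id divg d) :
    LinearMap.range d0 = LinearMap.ker d1 ∧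
    LinearMap.range d1 = LinearMap.ker d2 ∧
    Function.Surjective d2 := by
  have hD : Function.Bijective dhat :=
    Polynomial.bijective_of_apply_C_add_X_sub_C_mul (a := 1) (b := -1)
      (mul_ne_zero Complex.I_ne_zero hκ) dhat fun u q hq w hw => by
        simpa using hdhat u q hq w (by simpa using hw)
  have hperp2 : perp ∘ₗ perp = -LinearMap.id := LinearMap.ext fun v => by
    ext <;> simp [hperp]
  have hperp_grad : perp ∘ₗ grad = gradperp := LinearMap.ext fun f => by
    ext <;> simp [hperp, hgrad, hgradperp]
  have hcurl_grad : scurl ∘ₗ grad = 0 := LinearMap.ext fun f => Subtype.ext <| by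
    rw [LinearMap.comp_apply, hscurl, (hgrad f).1, (hgrad f).2,
      MvPolynomial.pderiv_pderiv_comm, sub_self, LinearMap.zero_apply, ZeroMemClass.coe_zero]
  have hcurl_perp : scurl ∘ₗ perp = divg := LinearMap.ext fun v => Subtype.ext <| by
    simp [hperp, hscurl, hdivg]
  have hdiv_gradperp : divg ∘ₗ gradperp = 0 := LinearMap.ext fun f => Subtype.ext <| by
    rw [LinearMap.comp_apply, hdivg, (hgradperp f).1, (hgradperp f).2, map_neg,
      MvPolynomial.pderiv_pderiv_comm, neg_add_cancel, LinearMap.zero_apply, ZeroMemClass.coe_zero]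
  exact ⟨(LinearMap.exact_iff.mp <|
      exact_d0_d1_of_bijective hD hperp2 hperp_grad hcurl_grad d0 hd0 d1 hd1).symm,
    (LinearMap.exact_iff.mp <|
      exact_d1_d2_of_bijective hD hperp2 hcurl_perp hdiv_gradperp d1 hd1 d2 hd2).symm,
    surjective_d2_of_surjective hD.2 d2 hd2⟩

/-- The discrete Hardy-space infinite element sequence
`W →(d⁰) V →(d¹) Q →(d²) X → 0` is exact. -/
theorem stmt0 (N p : ℕ) (hp : 2 ≤ p) (κ₀ : ℂ) (hκ : κ₀ ≠ 0)
    -- the radial derivative operator ∂̂ on Π_{N+1}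
    (dhat : ↥(Polynomial.degreeLE ℂ (N + 1)) →ₗ[ℂ] ↥(Polynomial.degreeLE ℂ (N + 1)))
    (hdhat : ∀ (u₀ : ℂ) (q : Polynomial ℂ), q.degree ≤ (N : ℕ) →
      ∀ w : ↥(Polynomial.degreeLE ℂ (N + 1)),
        (w : Polynomial ℂ) = Polynomial.C u₀ + (Polynomial.X - 1) * q →
        (dhat w : Polynomial ℂ)
          = (Complex.I * κ₀) • (Polynomial.C u₀ + (Polynomial.X + 1) * q))
    -- the surface gradient ∇ : P^p → (P^{p-1})²
    (grad : ↥(MvPolynomial.restrictTotalDegree (Fin 2) ℂ p) →ₗ[ℂ]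
      ↥(MvPolynomial.restrictTotalDegree (Fin 2) ℂ (p - 1)) ×
        ↥(MvPolynomial.restrictTotalDegree (Fin 2) ℂ (p - 1)))
    (hgrad : ∀ f, ((grad f).1 : MvPolynomial (Fin 2) ℂ)
          = MvPolynomial.pderiv (0 : Fin 2) (f : MvPolynomial (Fin 2) ℂ) ∧
        ((grad f).2 : MvPolynomial (Fin 2) ℂ)
          = MvPolynomial.pderiv (1 : Fin 2) (f : MvPolynomial (Fin 2) ℂ))
    -- the rotated surface gradient ∇^⊥ : P^p → (P^{p-1})²
    (gradperp : ↥(MvPolynomial.restrictTotalDegree (Fin 2) ℂ p) →ₗ[ℂ]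
      ↥(MvPolynomial.restrictTotalDegree (Fin 2) ℂ (p - 1)) ×
        ↥(MvPolynomial.restrictTotalDegree (Fin 2) ℂ (p - 1)))
    (hgradperp : ∀ f, ((gradperp f).1 : MvPolynomial (Fin 2) ℂ)
          = -(MvPolynomial.pderiv (1 : Fin 2) (f : MvPolynomial (Fin 2) ℂ)) ∧
        ((gradperp f).2 : MvPolynomial (Fin 2) ℂ)
          = MvPolynomial.pderiv (0 : Fin 2) (f : MvPolynomial (Fin 2) ℂ))
    -- the scalar curl ∇^⊥· : (P^{p-1})² → P^{p-2}
    (scurl : (↥(MvPolynomial.restrictTotalDegree (Fin 2) ℂ (p - 1)) ×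
        ↥(MvPolynomial.restrictTotalDegree (Fin 2) ℂ (p - 1))) →ₗ[ℂ]
      ↥(MvPolynomial.restrictTotalDegree (Fin 2) ℂ (p - 2)))
    (hscurl : ∀ v, (scurl v : MvPolynomial (Fin 2) ℂ)
          = MvPolynomial.pderiv (0 : Fin 2) (v.2 : MvPolynomial (Fin 2) ℂ)
            - MvPolynomial.pderiv (1 : Fin 2) (v.1 : MvPolynomial (Fin 2) ℂ))
    -- the rotation v ↦ v^⊥ on (P^{p-1})²
    (perp : (↥(MvPolynomial.restrictTotalDegree (Fin 2) ℂ (p - 1)) ×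
        ↥(MvPolynomial.restrictTotalDegree (Fin 2) ℂ (p - 1))) →ₗ[ℂ]
      ↥(MvPolynomial.restrictTotalDegree (Fin 2) ℂ (p - 1)) ×
        ↥(MvPolynomial.restrictTotalDegree (Fin 2) ℂ (p - 1)))
    (hperp : ∀ v, perp v = (-v.2, v.1))
    -- the surface divergence ∇· : (P^{p-1})² → P^{p-2}
    (divg : (↥(MvPolynomial.restrictTotalDegree (Fin 2) ℂ (p - 1)) ×
        ↥(MvPolynomial.restrictTotalDegree (Fin 2) ℂ (p - 1))) →ₗ[ℂ]
      ↥(MvPolynomial.restrictTotalDegree (Fin 2) ℂ (p - 2)))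
    (hdivg : ∀ v, (divg v : MvPolynomial (Fin 2) ℂ)
          = MvPolynomial.pderiv (0 : Fin 2) (v.1 : MvPolynomial (Fin 2) ℂ)
            + MvPolynomial.pderiv (1 : Fin 2) (v.2 : MvPolynomial (Fin 2) ℂ))
    -- d⁰ : W → V, w ↦ ((∂̂ ⊗ id) w, (id ⊗ ∇) w)
    (d0 : (↥(Polynomial.degreeLE ℂ (N + 1)) ⊗[ℂ]
        ↥(MvPolynomial.restrictTotalDegree (Fin 2) ℂ p)) →ₗ[ℂ]
      (↥(Polynomial.degreeLE ℂ (N + 1)) ⊗[ℂ]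
        ↥(MvPolynomial.restrictTotalDegree (Fin 2) ℂ p)) ×
      (↥(Polynomial.degreeLE ℂ (N + 1)) ⊗[ℂ]
        (↥(MvPolynomial.restrictTotalDegree (Fin 2) ℂ (p - 1)) ×
          ↥(MvPolynomial.restrictTotalDegree (Fin 2) ℂ (p - 1)))))
    (hd0 : ∀ w, d0 w = (TensorProduct.map dhat LinearMap.id w,
      TensorProduct.map LinearMap.id grad w))
    -- d¹ : V → Q, (a,b) ↦ ((id ⊗ ∇^⊥·) b, −(id ⊗ ∇^⊥) a + (∂̂ ⊗ ⊥) b)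
    (d1 : ((↥(Polynomial.degreeLE ℂ (N + 1)) ⊗[ℂ]
        ↥(MvPolynomial.restrictTotalDegree (Fin 2) ℂ p)) ×
      (↥(Polynomial.degreeLE ℂ (N + 1)) ⊗[ℂ]
        (↥(MvPolynomial.restrictTotalDegree (Fin 2) ℂ (p - 1)) ×
          ↥(MvPolynomial.restrictTotalDegree (Fin 2) ℂ (p - 1))))) →ₗ[ℂ]
      ((↥(Polynomial.degreeLE ℂ (N + 1)) ⊗[ℂ]
        ↥(MvPolynomial.restrictTotalDegree (Fin 2) ℂ (p - 2))) ×
      (↥(Polynomial.degreeLE ℂ (N + 1)) ⊗[ℂ]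
        (↥(MvPolynomial.restrictTotalDegree (Fin 2) ℂ (p - 1)) ×
          ↥(MvPolynomial.restrictTotalDegree (Fin 2) ℂ (p - 1))))))
    (hd1 : ∀ a b, d1 (a, b) = (TensorProduct.map LinearMap.id scurl b,
      - TensorProduct.map LinearMap.id gradperp a + TensorProduct.map dhat perp b))
    -- d² : Q → X, (c,d) ↦ (∂̂ ⊗ id) c + (id ⊗ ∇·) d
    (d2 : ((↥(Polynomial.degreeLE ℂ (N + 1)) ⊗[ℂ]
        ↥(MvPolynomial.restrictTotalDegree (Fin 2) ℂ (p - 2))) ×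
      (↥(Polynomial.degreeLE ℂ (N + 1)) ⊗[ℂ]
        (↥(MvPolynomial.restrictTotalDegree (Fin 2) ℂ (p - 1)) ×
          ↥(MvPolynomial.restrictTotalDegree (Fin 2) ℂ (p - 1))))) →ₗ[ℂ]
      ↥(Polynomial.degreeLE ℂ (N + 1)) ⊗[ℂ]
        ↥(MvPolynomial.restrictTotalDegree (Fin 2) ℂ (p - 2)))
    (hd2 : ∀ c d, d2 (c, d) = TensorProduct.map dhat LinearMap.id c
      + TensorProduct.map LinearMap.id divg d) :
    LinearMap.range d0 = LinearMap.ker d1 ∧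
    LinearMap.range d1 = LinearMap.ker d2 ∧
    Function.Surjective d2 :=
  stmt0_general N p κ₀ hκ dhat hdhat grad hgrad gradperp hgradperp scurl hscurl perp hperp divg
    hdivg d0 hd0 d1 hd1 d2 hd2
end

section
/- The linear map d⁰ : W → V has trivial kernel, i.e. it is injective. -/
/-!
The first component of `d⁰` is `∂̂ ⊗ id`, so it suffices that `∂̂` is injective: tensoring with a
vector space preserves injectivity. If `∂̂ (u₀ + (z - 1) q) = 0`, evaluating `u₀ + (z + 1) q` at
`z = -1` gives `u₀ = 0`, and then `(z + 1) q = 0` forces `q = 0`.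
-/

open Polynomial

namespace Polynomial

variable {R : Type*} [CommRing R]

theorem C_eval_add_X_sub_C_mul_divByMonic (p : R[X]) (a : R) :
    C (p.eval a) + (X - C a) * (p /ₘ (X - C a)) = p := by
  rw [← modByMonic_X_sub_C_eq_C_eval, modByMonic_add_div]

theorem degree_divByMonic_X_sub_C_le {p : R[X]} {n : ℕ} (a : R) (hp : p.degree ≤ ↑(n + 1)) :
    (p /ₘ (X - C a)).degree ≤ n := by
  nontriviality R
  rw [← natDegree_le_iff_degree_le, natDegree_divByMonic _ (monic_X_sub_C a), natDegree_X_sub_C]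
  have := natDegree_le_iff_degree_le.mpr hp
  omega

theorem eq_zero_of_C_add_X_add_one_mul_eq_zero {u : R} {q : R[X]}
    (h : C u + (X + 1) * q = 0) : u = 0 ∧ q = 0 := by
  have hu : u = 0 := by simpa using congrArg (eval (-1)) h
  refine ⟨hu, ?_⟩
  rw [hu, map_zero, zero_add] at h
  nontriviality R
  exact (monic_X_add_C 1).mul_right_eq_zero_iff.mp (by simpa using h)

end Polynomial

theorem injective_of_map_C_add_X_sub_one_mul {R : Type*} [CommRing R] [IsDomain R] {n : ℕ}
    {c : R} (hc : c ≠ 0) (D : degreeLE R (n + 1) →ₗ[R] degreeLE R (n + 1))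
    (hD : ∀ (u : R) (q : R[X]), q.degree ≤ n → ∀ w : degreeLE R (n + 1),
      (w : R[X]) = C u + (X - 1) * q → (D w : R[X]) = c • (C u + (X + 1) * q)) :
    Function.Injective D := by
  refine (injective_iff_map_eq_zero D).mpr fun w hw => ?_
  set q := (w : R[X]) /ₘ (X - C 1)
  have hwq : (w : R[X]) = C ((w : R[X]).eval 1) + (X - 1) * q := by
    rw [← map_one C, C_eval_add_X_sub_C_mul_divByMonic]
  have hq : q.degree ≤ n := degree_divByMonic_X_sub_C_le 1 (mem_degreeLE.mp w.2)
  have hzero : C ((w : R[X]).eval 1) + (X + 1) * q = 0 := by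
    have := hD _ q hq w hwq
    rw [hw, ZeroMemClass.coe_zero, eq_comm, smul_eq_zero] at this
    exact this.resolve_left hc
  obtain ⟨hu, hq0⟩ := eq_zero_of_C_add_X_add_one_mul_eq_zero hzero
  ext1
  rw [hwq, hu, hq0]
  simp

open TensorProduct

theorem stmt1_general (N p : ℕ) (κ₀ : ℂ) (hκ : κ₀ ≠ 0)
    -- the radial derivative operator ∂̂ on Π_{N+1}
    (dhat : ↥(Polynomial.degreeLE ℂ (N + 1)) →ₗ[ℂ] ↥(Polynomial.degreeLE ℂ (N + 1)))
    (hdhat : ∀ (u₀ : ℂ) (q : Polynomial ℂ), q.degree ≤ (N : ℕ) →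
      ∀ w : ↥(Polynomial.degreeLE ℂ (N + 1)),
        (w : Polynomial ℂ) = Polynomial.C u₀ + (Polynomial.X - 1) * q →
        (dhat w : Polynomial ℂ)
          = (Complex.I * κ₀) • (Polynomial.C u₀ + (Polynomial.X + 1) * q))
    -- the surface gradient ∇ : P^p → (P^{p-1})²
    (grad : ↥(MvPolynomial.restrictTotalDegree (Fin 2) ℂ p) →ₗ[ℂ]
      ↥(MvPolynomial.restrictTotalDegree (Fin 2) ℂ (p - 1)) ×
        ↥(MvPolynomial.restrictTotalDegree (Fin 2) ℂ (p - 1)))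
    -- d⁰ : W → V, w ↦ ((∂̂ ⊗ id) w, (id ⊗ ∇) w)
    (d0 : (↥(Polynomial.degreeLE ℂ (N + 1)) ⊗[ℂ]
        ↥(MvPolynomial.restrictTotalDegree (Fin 2) ℂ p)) →ₗ[ℂ]
      (↥(Polynomial.degreeLE ℂ (N + 1)) ⊗[ℂ]
        ↥(MvPolynomial.restrictTotalDegree (Fin 2) ℂ p)) ×
      (↥(Polynomial.degreeLE ℂ (N + 1)) ⊗[ℂ]
        (↥(MvPolynomial.restrictTotalDegree (Fin 2) ℂ (p - 1)) ×
          ↥(MvPolynomial.restrictTotalDegree (Fin 2) ℂ (p - 1)))))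
    (hd0 : ∀ w, d0 w = (TensorProduct.map dhat LinearMap.id w,
      TensorProduct.map LinearMap.id grad w)) :
    LinearMap.ker d0 = ⊥ ∧ Function.Injective d0 := by
  have hdhat_inj : Function.Injective dhat :=
    injective_of_map_C_add_X_sub_one_mul (mul_ne_zero Complex.I_ne_zero hκ) dhat hdhat
  have hfst : Prod.fst ∘ d0 = dhat.rTensor _ := by
    ext1 w
    simp [hd0, LinearMap.rTensor]
  have hd0_inj : Function.Injective d0 := Function.Injective.of_comp (f := Prod.fst) <| by
    rw [hfst]
    exact Module.Flat.rTensor_preserves_injective_linearMap dhat hdhat_inj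
  exact ⟨LinearMap.ker_eq_bot'.mpr fun w hw => hd0_inj (hw.trans (map_zero d0).symm), hd0_inj⟩

/-- The linear map `d⁰ : W → V` has trivial kernel, i.e. it is injective. -/
theorem stmt1 (N p : ℕ) (hp : 2 ≤ p) (κ₀ : ℂ) (hκ : κ₀ ≠ 0)
    -- the radial derivative operator ∂̂ on Π_{N+1}
    (dhat : ↥(Polynomial.degreeLE ℂ (N + 1)) →ₗ[ℂ] ↥(Polynomial.degreeLE ℂ (N + 1)))
    (hdhat : ∀ (u₀ : ℂ) (q : Polynomial ℂ), q.degree ≤ (N : ℕ) →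
      ∀ w : ↥(Polynomial.degreeLE ℂ (N + 1)),
        (w : Polynomial ℂ) = Polynomial.C u₀ + (Polynomial.X - 1) * q →
        (dhat w : Polynomial ℂ)
          = (Complex.I * κ₀) • (Polynomial.C u₀ + (Polynomial.X + 1) * q))
    -- the surface gradient ∇ : P^p → (P^{p-1})²
    (grad : ↥(MvPolynomial.restrictTotalDegree (Fin 2) ℂ p) →ₗ[ℂ]
      ↥(MvPolynomial.restrictTotalDegree (Fin 2) ℂ (p - 1)) ×
        ↥(MvPolynomial.restrictTotalDegree (Fin 2) ℂ (p - 1)))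
    (hgrad : ∀ f, ((grad f).1 : MvPolynomial (Fin 2) ℂ)
          = MvPolynomial.pderiv (0 : Fin 2) (f : MvPolynomial (Fin 2) ℂ) ∧
        ((grad f).2 : MvPolynomial (Fin 2) ℂ)
          = MvPolynomial.pderiv (1 : Fin 2) (f : MvPolynomial (Fin 2) ℂ))
    -- d⁰ : W → V, w ↦ ((∂̂ ⊗ id) w, (id ⊗ ∇) w)
    (d0 : (↥(Polynomial.degreeLE ℂ (N + 1)) ⊗[ℂ]
        ↥(MvPolynomial.restrictTotalDegree (Fin 2) ℂ p)) →ₗ[ℂ]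
      (↥(Polynomial.degreeLE ℂ (N + 1)) ⊗[ℂ]
        ↥(MvPolynomial.restrictTotalDegree (Fin 2) ℂ p)) ×
      (↥(Polynomial.degreeLE ℂ (N + 1)) ⊗[ℂ]
        (↥(MvPolynomial.restrictTotalDegree (Fin 2) ℂ (p - 1)) ×
          ↥(MvPolynomial.restrictTotalDegree (Fin 2) ℂ (p - 1)))))
    (hd0 : ∀ w, d0 w = (TensorProduct.map dhat LinearMap.id w,
      TensorProduct.map LinearMap.id grad w)) :
    LinearMap.ker d0 = ⊥ ∧ Function.Injective d0 :=
  stmt1_general N p κ₀ hκ dhat hdhat grad d0 hd0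
end

section
/- Let c ∈ {1, −1}, u₀ ∈ ℂ, and let α : ℕ → ℂ be a square-summable sequence (Σ_{j≥0} |α_j|² < ∞). If for every z ∈ ℂ with |z| < 1 one has u₀ + (z + c)·Σ_{j≥0} α_j z^j = 0 (the power series converges absolutely on the open unit disk), then u₀ = 0 and α_j = 0 for all j. -/
/-!
Expanding `u₀ + (z + c) f(z)` with `f(z) = ∑ αₙ zⁿ` gives a power series with coefficients
`u₀ + c α₀` and `αₙ + c αₙ₊₁`, which vanishes on the disk, so all these coefficients vanish.
Then `‖αₙ‖ ≤ ‖c‖ ‖αₙ₊₁‖ ≤ ‖αₙ₊₁‖`: the norms are nondecreasing, yet they tend to zero because `α`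
is square-summable. Hence `α = 0`, and then `u₀ = 0`.
-/

open Filter Topology

theorem eq_zero_of_eventually_hasSum_mul_pow_zero {𝕜 : Type*} [NontriviallyNormedField 𝕜]
    {β : ℕ → 𝕜} (h : ∀ᶠ z in 𝓝 0, HasSum (fun n => β n * z ^ n) 0) : β = 0 := by
  obtain ⟨ε, hε, hball⟩ := Metric.eventually_nhds_iff_ball.mp h
  obtain ⟨x, hx0, hxε⟩ := NormedField.exists_norm_lt 𝕜 hε
  set p : FormalMultilinearSeries 𝕜 𝕜 𝕜 := FormalMultilinearSeries.ofScalars 𝕜 β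
  have hp : ∀ n (y : 𝕜), p n (fun _ => y) = β n * y ^ n := fun n y => by
    simp [p, mul_comm]
  have hsum : ∀ y : 𝕜, ‖y‖ ≤ ‖x‖ → HasSum (fun n => p n (fun _ => y)) 0 := fun y hy => by
    simpa only [hp] using hball y (by rw [mem_ball_zero_iff]; linarith)
  have hseries : HasFPowerSeriesOnBall (fun _ => (0 : 𝕜)) p 0 ‖x‖₊ :=
    { r_le := p.le_radius_of_tendsto (l := 0) <| by
        simpa only [p, FormalMultilinearSeries.ofScalars_norm, coe_nnnorm, hp, norm_mul, norm_pow,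
          norm_zero] using (hsum x le_rfl).summable.tendsto_atTop_zero.norm
      r_pos := by simpa using hx0
      hasSum := fun hy => hsum _ (mod_cast (mem_eball_zero_iff.mp hy).le) }
  exact (FormalMultilinearSeries.ofScalars_series_eq_zero (E := 𝕜)).mp
    hseries.hasFPowerSeriesAt.eq_zero

theorem summable_mul_pow_of_tendsto_zero {𝕜 : Type*} [NormedField 𝕜] [CompleteSpace 𝕜]
    {α : ℕ → 𝕜} (hα : Tendsto α atTop (𝓝 0)) {z : 𝕜} (hz : ‖z‖ < 1) :
    Summable fun n => α n * z ^ n :=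
  .of_norm <| summable_norm_mul_geometric_of_norm_lt_one' (k := 0) hz <| by
    simpa using hα.isBigO_one 𝕜

def affineMulCoeff {R : Type*} [Semiring R] (u₀ c : R) (α : ℕ → R) : ℕ → R
  | 0 => u₀ + c * α 0
  | n + 1 => α n + c * α (n + 1)

theorem HasSum.affineMulCoeff_mul_pow {R : Type*} [CommRing R] [TopologicalSpace R]
    [IsTopologicalRing R] {α : ℕ → R} {z s : R} (u₀ c : R) (h : HasSum (fun n => α n * z ^ n) s) :
    HasSum (fun n => affineMulCoeff u₀ c α n * z ^ n) (u₀ + (z + c) * s) := by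
  have hshift : HasSum (fun n => α (n + 1) * z ^ (n + 1)) (s - α 0) := by
    simpa using (hasSum_nat_add_iff' 1).mpr h
  have htail : HasSum (fun n => affineMulCoeff u₀ c α (n + 1) * z ^ (n + 1))
      (z * s + c * (s - α 0)) := by
    refine ((h.mul_left z).add (hshift.mul_left c)).congr_fun fun n => ?_
    simp only [affineMulCoeff]
    ring
  convert htail.zero_add (f := fun n => affineMulCoeff u₀ c α n * z ^ n) using 1
  simp only [affineMulCoeff]
  ring

theorem eq_zero_of_affineMulCoeff_eq_zero {R : Type*} [NormedRing R] {u₀ c : R} {α : ℕ → R}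
    (hc : ‖c‖ ≤ 1) (hα : Tendsto α atTop (𝓝 0)) (h : affineMulCoeff u₀ c α = 0) :
    u₀ = 0 ∧ α = 0 := by
  have hmono : Monotone fun n => ‖α n‖ := monotone_nat_of_le_succ fun n => by
    have hn : α n = -(c * α (n + 1)) := eq_neg_of_add_eq_zero_left (congrFun h (n + 1))
    calc ‖α n‖ ≤ ‖c‖ * ‖α (n + 1)‖ := by rw [hn, norm_neg]; exact norm_mul_le _ _
      _ ≤ ‖α (n + 1)‖ := mul_le_of_le_one_left (norm_nonneg _) hc
  have hα0 : α = 0 := funext fun n => norm_le_zero_iff.mp <|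
    hmono.ge_of_tendsto (tendsto_zero_iff_norm_tendsto_zero.mp hα) n
  refine ⟨?_, hα0⟩
  simpa [affineMulCoeff, hα0] using congrFun h 0

/-- Injectivity of the operators `T_±` on the Hardy space `H⁺(S¹)`:
if `u₀ + (z + c)·Σ_j α_j z^j = 0` on the open unit disk with `α` square-summable,
then `u₀ = 0` and `α ≡ 0`. -/
theorem stmt4 (c : ℂ) (hc : c = 1 ∨ c = -1) (u₀ : ℂ) (α : ℕ → ℂ)
    (hα : Summable fun j => ‖α j‖ ^ 2)
    (h : ∀ z : ℂ, ‖z‖ < 1 → u₀ + (z + c) * ∑' j : ℕ, α j * z ^ j = 0) :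
    u₀ = 0 ∧ ∀ j, α j = 0 := by
  have hc_norm : ‖c‖ ≤ 1 := by rcases hc with rfl | rfl <;> simp
  have hα_lim : Tendsto α atTop (𝓝 0) := tendsto_zero_iff_norm_tendsto_zero.mpr <| by
    simpa using hα.tendsto_atTop_zero.sqrt
  have hcoeff : affineMulCoeff u₀ c α = 0 := by
    refine eq_zero_of_eventually_hasSum_mul_pow_zero <|
      eventually_of_mem (Metric.ball_mem_nhds 0 one_pos) fun z hz => ?_
    have hz : ‖z‖ < 1 := mem_ball_zero_iff.mp hz
    simpa only [h z hz] using
      (summable_mul_pow_of_tendsto_zero hα_lim hz).hasSum.affineMulCoeff_mul_pow u₀ c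
  obtain ⟨hu₀, hα0⟩ := eq_zero_of_affineMulCoeff_eq_zero hc_norm hα_lim hcoeff
  exact ⟨hu₀, congrFun hα0⟩
end

section
/- Let U and Ω be open subsets of ℝ³ and F : U → Ω a C² diffeomorphism with everywhere invertible Jacobian matrix J(x). Let û : U → ℝ³ be continuously differentiable and define u : Ω → ℝ³ by u(F(x)) = J(x)^{−T} û(x) for x ∈ U. Then for every x ∈ U one has (∇×u)(F(x)) = (1/det J(x)) · J(x) · (∇×û)(x). -/
/-- The partial derivative `∂ᵢw(x)` of a scalar function on `ℝ³`. -/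
noncomputable def pd3 (w : (Fin 3 → ℝ) → ℝ) (i : Fin 3) (x : Fin 3 → ℝ) : ℝ :=
  fderiv ℝ w x (Pi.single i 1)

/-- The curl `∇×w = (∂₂w₃ − ∂₃w₂, ∂₃w₁ − ∂₁w₃, ∂₁w₂ − ∂₂w₁)` of a vector field on `ℝ³`. -/
noncomputable def curl3 (w : (Fin 3 → ℝ) → (Fin 3 → ℝ)) (x : Fin 3 → ℝ) : Fin 3 → ℝ :=
  ![pd3 (fun y => w y 2) 1 x - pd3 (fun y => w y 1) 2 x,
    pd3 (fun y => w y 0) 2 x - pd3 (fun y => w y 2) 0 x,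
    pd3 (fun y => w y 1) 0 x - pd3 (fun y => w y 0) 1 x]

/-
Near `F x` the field `u` is the pullback `(D F⁻¹)ᵀ (û ∘ F⁻¹)` of `û` along `F⁻¹`, since
`D F⁻¹ (F x) = J(x)⁻¹`. For any pullback `G^*w = (DG)ᵀ (w ∘ G)` the product rule gives
`D(G^*w) = ⟨D²G, w⟩ + (DG)ᵀ (Dw ∘ G) DG`; the first term is symmetric by Schwarz's theorem and so
does not contribute to the curl, and the cofactor identity `Kᵀ [a]× K = [det K • K⁻¹ a]×` turns
the second into `DG · ∇×(G^*w) = det DG • (∇×w) ∘ G`. Taking `G = F⁻¹` gives the formula.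
-/

open Matrix Filter Topology

noncomputable def jacobianMatrix {m n : ℕ} (f : (Fin m → ℝ) → Fin n → ℝ) (x : Fin m → ℝ) :
    Matrix (Fin n) (Fin m) ℝ :=
  LinearMap.toMatrix' (fderiv ℝ f x : (Fin m → ℝ) →ₗ[ℝ] Fin n → ℝ)

section Jacobian

variable {l m n : ℕ}

theorem jacobianMatrix_apply (f : (Fin m → ℝ) → Fin n → ℝ) (x : Fin m → ℝ) (i : Fin n)
    (j : Fin m) : jacobianMatrix f x i j = fderiv ℝ f x (Pi.single j 1) i :=
  LinearMap.toMatrix'_apply _ _ _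

theorem jacobianMatrix_comp {g : (Fin m → ℝ) → Fin n → ℝ} {f : (Fin l → ℝ) → Fin m → ℝ}
    {x : Fin l → ℝ} (hg : DifferentiableAt ℝ g (f x)) (hf : DifferentiableAt ℝ f x) :
    jacobianMatrix (g ∘ f) x = jacobianMatrix g (f x) * jacobianMatrix f x := by
  rw [jacobianMatrix, fderiv_comp x hg hf]
  exact LinearMap.toMatrix'_comp _ _

theorem jacobianMatrix_mul_jacobianMatrix_eq_one {f : (Fin m → ℝ) → Fin n → ℝ}
    {g : (Fin n → ℝ) → Fin m → ℝ} {y : Fin n → ℝ} (hfg : ∀ᶠ z in 𝓝 y, f (g z) = z)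
    (hf : DifferentiableAt ℝ f (g y)) (hg : DifferentiableAt ℝ g y) :
    jacobianMatrix f (g y) * jacobianMatrix g y = 1 := by
  rw [← jacobianMatrix_comp hf hg, jacobianMatrix, (show f ∘ g =ᶠ[𝓝 y] id from hfg).fderiv_eq,
    fderiv_id, ContinuousLinearMap.coe_id, LinearMap.toMatrix'_id]

theorem fderiv_component_apply {f : (Fin m → ℝ) → Fin n → ℝ} {x : Fin m → ℝ}
    (hf : DifferentiableAt ℝ f x) (i : Fin n) (v : Fin m → ℝ) :
    fderiv ℝ (fun y => f y i) x v = fderiv ℝ f x v i := by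
  rw [fderiv_apply hf]
  rfl

end Jacobian

-- `B - Bᵀ` acts on `ℝ³` as `axialVector B × ·`.
def axialVector {R : Type*} [Ring R] (B : Matrix (Fin 3) (Fin 3) R) : Fin 3 → R :=
  ![B 2 1 - B 1 2, B 0 2 - B 2 0, B 1 0 - B 0 1]

theorem axialVector_add_of_isSymm {R : Type*} [Ring R] {S : Matrix (Fin 3) (Fin 3) R}
    (hS : S.IsSymm) (B : Matrix (Fin 3) (Fin 3) R) : axialVector (S + B) = axialVector B := by
  ext i
  fin_cases i <;> simp [axialVector, hS.apply]

-- The cofactor identity `Jᵀ [a]× J = [det J • J⁻¹ a]×`, written without inverses.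
theorem mulVec_axialVector_transpose_mul_mul {R : Type*} [CommRing R]
    (J A : Matrix (Fin 3) (Fin 3) R) : J *ᵥ axialVector (Jᵀ * A * J) = J.det • axialVector A := by
  ext i
  fin_cases i <;>
    simp [axialVector, mulVec, dotProduct, mul_apply, Fin.sum_univ_three, det_fin_three] <;> ring

theorem curl3_eq_axialVector_jacobianMatrix {w : (Fin 3 → ℝ) → Fin 3 → ℝ} {x : Fin 3 → ℝ}
    (hw : DifferentiableAt ℝ w x) : curl3 w x = axialVector (jacobianMatrix w x) := by
  simp only [curl3, pd3, fderiv_component_apply hw, axialVector, jacobianMatrix_apply]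

theorem Filter.EventuallyEq.curl3_eq {v w : (Fin 3 → ℝ) → Fin 3 → ℝ} {x : Fin 3 → ℝ}
    (h : v =ᶠ[𝓝 x] w) : curl3 v x = curl3 w x := by
  have hcomp : ∀ i, (fun y => v y i) =ᶠ[𝓝 x] fun y => w y i := fun i => h.fun_comp (· i)
  simp only [curl3, pd3, (hcomp _).fderiv_eq]

-- The pullback `G^*w` of the covector field `w` along `G`, in vector notation.
noncomputable def covariantPullback {m n : ℕ} (G : (Fin m → ℝ) → Fin n → ℝ)
    (w : (Fin n → ℝ) → Fin n → ℝ) (z : Fin m → ℝ) : Fin m → ℝ :=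
  (jacobianMatrix G z)ᵀ *ᵥ w (G z)

section Pullback

variable {m n : ℕ} {G : (Fin m → ℝ) → Fin n → ℝ} {w : (Fin n → ℝ) → Fin n → ℝ} {y : Fin m → ℝ}

theorem covariantPullback_eq_sum (G : (Fin m → ℝ) → Fin n → ℝ) (w : (Fin n → ℝ) → Fin n → ℝ) :
    covariantPullback G w = fun z i => ∑ k, fderiv ℝ G z (Pi.single i 1) k * (w ∘ G) z k := by
  ext z i
  simp [covariantPullback, mulVec, dotProduct, jacobianMatrix_apply]

theorem differentiableAt_covariantPullback (hG : DifferentiableAt ℝ G y)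
    (hG' : DifferentiableAt ℝ (fderiv ℝ G) y) (hw : DifferentiableAt ℝ w (G y)) :
    DifferentiableAt ℝ (covariantPullback G w) y := by
  have hcol (i : Fin m) : DifferentiableAt ℝ (fun z => fderiv ℝ G z (Pi.single i 1)) y :=
    hG'.clm_apply (differentiableAt_const _)
  rw [covariantPullback_eq_sum, differentiableAt_pi]
  exact fun i => DifferentiableAt.fun_sum fun k _ =>
    (differentiableAt_pi.1 (hcol i) k).mul (differentiableAt_pi.1 (hw.comp y hG) k)

theorem jacobianMatrix_covariantPullback (hG : DifferentiableAt ℝ G y)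
    (hG' : DifferentiableAt ℝ (fderiv ℝ G) y) (hw : DifferentiableAt ℝ w (G y)) :
    jacobianMatrix (covariantPullback G w) y =
      of (fun i j => ∑ k, fderiv ℝ (fderiv ℝ G) y (Pi.single j 1) (Pi.single i 1) k * w (G y) k)
        + (jacobianMatrix G y)ᵀ * jacobianMatrix (w ∘ G) y := by
  ext i j
  have hcol : DifferentiableAt ℝ (fun z => fderiv ℝ G z (Pi.single i 1)) y :=
    hG'.clm_apply (differentiableAt_const _)
  have hwG : DifferentiableAt ℝ (w ∘ G) y := hw.comp y hG
  rw [jacobianMatrix_apply,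
    ← fderiv_component_apply (differentiableAt_covariantPullback hG hG' hw)]
  simp only [covariantPullback_eq_sum]
  rw [fderiv_fun_sum (A := fun k z => fderiv ℝ G z (Pi.single i 1) k * (w ∘ G) z k)
    fun k _ => (differentiableAt_pi.1 hcol k).fun_mul (differentiableAt_pi.1 hwG k)]
  have hcol' : ∀ k, fderiv ℝ (fun z => fderiv ℝ G z (Pi.single i 1) k) y (Pi.single j 1) =
      fderiv ℝ (fderiv ℝ G) y (Pi.single j 1) (Pi.single i 1) k := by
    intro k
    rw [fderiv_component_apply hcol, fderiv_clm_apply hG' (differentiableAt_const _)]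
    simp
  simp only [FunLike.coe_sum, Finset.sum_apply, Matrix.add_apply, of_apply, mul_apply,
    transpose_apply, ← Finset.sum_add_distrib]
  refine Finset.sum_congr rfl fun k _ => ?_
  rw [fderiv_fun_mul (differentiableAt_pi.1 hcol k) (differentiableAt_pi.1 hwG k)]
  simp only [_root_.add_apply, _root_.smul_apply, smul_eq_mul, hcol', fderiv_component_apply hwG,
    jacobianMatrix_apply]
  rw [Function.comp_apply]
  ring

end Pullback

theorem mulVec_curl3_covariantPullback {G w : (Fin 3 → ℝ) → Fin 3 → ℝ} {y : Fin 3 → ℝ}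
    (hG : ContDiffAt ℝ 2 G y) (hw : DifferentiableAt ℝ w (G y)) :
    jacobianMatrix G y *ᵥ curl3 (covariantPullback G w) y =
      (jacobianMatrix G y).det • curl3 w (G y) := by
  have hG₁ : DifferentiableAt ℝ G y := hG.differentiableAt (by norm_num)
  have hG₂ : DifferentiableAt ℝ (fderiv ℝ G) y :=
    (hG.fderiv_right (m := 1) (by norm_num)).differentiableAt (by norm_num)
  have hsymm : (of fun i j : Fin 3 =>
      ∑ k, fderiv ℝ (fderiv ℝ G) y (Pi.single j 1) (Pi.single i 1) k * w (G y) k).IsSymm := by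
    ext i j
    simp [hG.isSymmSndFDerivAt (by simp) (Pi.single i 1) (Pi.single j 1)]
  rw [curl3_eq_axialVector_jacobianMatrix (differentiableAt_covariantPullback hG₁ hG₂ hw),
    jacobianMatrix_covariantPullback hG₁ hG₂ hw, axialVector_add_of_isSymm hsymm,
    jacobianMatrix_comp hw hG₁, ← Matrix.mul_assoc, mulVec_axialVector_transpose_mul_mul,
    curl3_eq_axialVector_jacobianMatrix hw]

theorem stmt6_general (U Ω : Set (Fin 3 → ℝ)) (hU : IsOpen U) (hΩ : IsOpen Ω)
    (F Finv : (Fin 3 → ℝ) → (Fin 3 → ℝ))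
    (hF : ContDiffOn ℝ 2 F U) (hFinv : ContDiffOn ℝ 2 Finv Ω)
    (hFmaps : Set.MapsTo F U Ω) (hFinvmaps : Set.MapsTo Finv Ω U)
    (hleft : ∀ x ∈ U, Finv (F x) = x) (hright : ∀ y ∈ Ω, F (Finv y) = y)
    (J : (Fin 3 → ℝ) → Matrix (Fin 3) (Fin 3) ℝ)
    (hJ : ∀ x ∈ U, ∀ i j, J x i j = fderiv ℝ F x (Pi.single j 1) i)
    (uhat : (Fin 3 → ℝ) → (Fin 3 → ℝ)) (huhat : ContDiffOn ℝ 1 uhat U)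
    (u : (Fin 3 → ℝ) → (Fin 3 → ℝ))
    (hu : ∀ x ∈ U, u (F x) = ((J x)⁻¹).transpose.mulVec (uhat x)) :
    ∀ x ∈ U, curl3 u (F x) = (1 / (J x).det) • (J x).mulVec (curl3 uhat x) := by
  intro x hx
  have hJ_eq : ∀ x ∈ U, J x = jacobianMatrix F x := fun x hx => by
    ext i j
    rw [hJ x hx, jacobianMatrix_apply]
  have hJFinv : ∀ y ∈ Ω, J (Finv y) * jacobianMatrix Finv y = 1 := fun y hy => by
    rw [hJ_eq _ (hFinvmaps hy)]
    exact jacobianMatrix_mul_jacobianMatrix_eq_one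
      (Filter.eventually_of_mem (hΩ.mem_nhds hy) hright)
      ((hF.contDiffAt (hU.mem_nhds (hFinvmaps hy))).differentiableAt (by norm_num))
      ((hFinv.contDiffAt (hΩ.mem_nhds hy)).differentiableAt (by norm_num))
  have hu_pullback : u =ᶠ[𝓝 (F x)] covariantPullback Finv uhat := by
    filter_upwards [hΩ.mem_nhds (hFmaps hx)] with y hy
    rw [covariantPullback, ← inv_eq_right_inv (hJFinv y hy), ← hu _ (hFinvmaps hy), hright y hy]
  have huhat_diff : DifferentiableAt ℝ uhat (Finv (F x)) := by
    rw [hleft x hx]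
    exact (huhat.contDiffAt (hU.mem_nhds hx)).differentiableAt one_ne_zero
  have hcurl :=
    mulVec_curl3_covariantPullback (hFinv.contDiffAt (hΩ.mem_nhds (hFmaps hx))) huhat_diff
  have hJK := hJFinv (F x) (hFmaps hx)
  rw [← hu_pullback.curl3_eq, hleft x hx] at hcurl
  rw [hleft x hx] at hJK
  have hdet : (jacobianMatrix Finv (F x)).det = ((J x).det)⁻¹ :=
    eq_inv_of_mul_eq_one_right (by rw [← det_mul, hJK, det_one])
  calc curl3 u (F x) = J x *ᵥ (jacobianMatrix Finv (F x) *ᵥ curl3 u (F x)) := by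
        rw [mulVec_mulVec, hJK, one_mulVec]
    _ = (1 / (J x).det) • J x *ᵥ curl3 uhat x := by
        rw [hcurl, hdet, mulVec_smul, one_div]

/-- Transformation of the curl under a C² diffeomorphism `F`:
if `u(F(x)) = J(x)⁻ᵀ û(x)` then `(∇×u)(F(x)) = (1/det J(x)) J(x) (∇×û)(x)`. -/
theorem stmt6 (U Ω : Set (Fin 3 → ℝ)) (hU : IsOpen U) (hΩ : IsOpen Ω)
    (F Finv : (Fin 3 → ℝ) → (Fin 3 → ℝ))
    (hF : ContDiffOn ℝ 2 F U) (hFinv : ContDiffOn ℝ 2 Finv Ω)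
    (hFmaps : Set.MapsTo F U Ω) (hFinvmaps : Set.MapsTo Finv Ω U)
    (hleft : ∀ x ∈ U, Finv (F x) = x) (hright : ∀ y ∈ Ω, F (Finv y) = y)
    (J : (Fin 3 → ℝ) → Matrix (Fin 3) (Fin 3) ℝ)
    (hJ : ∀ x ∈ U, ∀ i j, J x i j = fderiv ℝ F x (Pi.single j 1) i)
    (hJunit : ∀ x ∈ U, IsUnit (J x))
    (uhat : (Fin 3 → ℝ) → (Fin 3 → ℝ)) (huhat : ContDiffOn ℝ 1 uhat U)
    (u : (Fin 3 → ℝ) → (Fin 3 → ℝ))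
    (hu : ∀ x ∈ U, u (F x) = ((J x)⁻¹).transpose.mulVec (uhat x)) :
    ∀ x ∈ U, curl3 u (F x) = (1 / (J x).det) • (J x).mulVec (curl3 uhat x) :=
  stmt6_general U Ω hU hΩ F Finv hF hFinv hFmaps hFinvmaps hleft hright J hJ uhat huhat u hu
end

section
/- Let U and Ω be open subsets of ℝ³ and F : U → Ω a C² diffeomorphism with everywhere invertible Jacobian matrix J(x). Let û : U → ℝ³ be continuously differentiable and define u : Ω → ℝ³ by u(F(x)) = (1/det J(x)) · J(x) · û(x) for x ∈ U. Then for every x ∈ U one has (∇·u)(F(x)) = (1/det J(x)) · (∇·û)(x). -/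
/-- The divergence `∇·w = ∂₁w₁ + ∂₂w₂ + ∂₃w₃` of a vector field on `ℝ³`. -/
noncomputable def div3 (w : (Fin 3 → ℝ) → (Fin 3 → ℝ)) (x : Fin 3 → ℝ) : ℝ :=
  ∑ i : Fin 3, pd3 (fun y => w y i) i x

open ContinuousLinearMap Filter Topology

namespace Matrix

open Equiv Finset

section CommRing

variable {ι R : Type*} [Fintype ι] [DecidableEq ι] [CommRing R]

theorem det_updateCol_eq_sum_perm (M : Matrix ι ι R) (i : ι) (c : ι → R) :
    (M.updateCol i c).det =
      ∑ σ : Perm ι, (Perm.sign σ : R) * ((∏ k ∈ univ.erase i, M (σ k) k) * c (σ i)) := by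
  rw [det_apply']
  refine sum_congr rfl fun σ _ => ?_
  rw [← prod_erase_mul _ _ (mem_univ i)]
  congr 2
  · exact prod_congr rfl fun k hk => by rw [updateCol_ne (ne_of_mem_erase hk)]
  · rw [updateCol_self]

theorem sum_det_updateCol_eq_trace_adjugate_mul (M H : Matrix ι ι R) :
    ∑ i, (M.updateCol i (fun k => H k i)).det = (M.adjugate * H).trace := by
  simp only [← cramer_apply, cramer_eq_adjugate_mulVec, trace, diag, mul_apply, mulVec, dotProduct]

theorem adjugate_eq_det_smul_of_mul_eq_one {M N : Matrix ι ι R} (h : N * M = 1) :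
    M.adjugate = M.det • N := by
  calc M.adjugate = M.adjugate * M * N := by
        rw [Matrix.mul_assoc, mul_eq_one_comm.mp h, Matrix.mul_one]
    _ = M.det • N := by rw [adjugate_mul, smul_mul, Matrix.one_mul]

end CommRing

theorem hasFDerivAt_det {𝕜 E ι : Type*} [NontriviallyNormedField 𝕜] [NormedAddCommGroup E]
    [NormedSpace 𝕜 E] [Fintype ι] [DecidableEq ι] {M : E → Matrix ι ι 𝕜}
    {M' : ι → ι → E →L[𝕜] 𝕜} {x : E} (hM : ∀ i j, HasFDerivAt (fun y => M y i j) (M' i j) x) :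
    HasFDerivAt (fun y => (M y).det) (∑ i, ∑ j, (M x).adjugate j i • M' i j) x := by
  have hLeibniz : HasFDerivAt (fun y => ∑ σ : Perm ι, (Perm.sign σ : 𝕜) * ∏ k, M y (σ k) k)
      (∑ σ : Perm ι, (Perm.sign σ : 𝕜) •
        ∑ i, (∏ k ∈ univ.erase i, M x (σ k) k) • M' (σ i) i) x :=
    HasFDerivAt.fun_sum fun σ _ =>
      (HasFDerivAt.finsetProd fun i _ => hM (σ i) i).const_mul _
  simp_rw [det_apply']
  refine hLeibniz.congr_fderiv (ContinuousLinearMap.ext fun h => ?_)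
  have := sum_det_updateCol_eq_trace_adjugate_mul (M x) (fun i j => M' i j h)
  simp only [det_updateCol_eq_sum_perm] at this
  simp only [_root_.sum_apply, _root_.smul_apply, smul_eq_mul, mul_sum]
  rw [sum_comm, this, trace]
  simp only [diag]
  exact sum_comm

end Matrix

section LinearAlgebra

variable {𝕜 V : Type*} [NontriviallyNormedField 𝕜] [NormedAddCommGroup V] [NormedSpace 𝕜 V]

theorem ContinuousLinearMap.det_ne_zero_of_comp_eq_id {A B : V →L[𝕜] V}
    (hBA : B ∘L A = .id 𝕜 V) : LinearMap.det (A : V →ₗ[𝕜] V) ≠ 0 := by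
  refine right_ne_zero_of_mul_eq_one (a := LinearMap.det (B : V →ₗ[𝕜] V)) ?_
  rw [← LinearMap.det_comp, ← toLinearMap_comp, hBA, coe_id, LinearMap.det_id]

variable [FiniteDimensional 𝕜 V]

theorem ContinuousLinearMap.trace_smulRight_comp (φ : V →L[𝕜] 𝕜) (v : V) (B : V →L[𝕜] V) :
    LinearMap.trace 𝕜 V (φ.smulRight v ∘L B) = φ (B v) := by
  have : ((φ.smulRight v ∘L B : V →L[𝕜] V) : V →ₗ[𝕜] V) =
      ((φ ∘L B : V →L[𝕜] 𝕜) : V →ₗ[𝕜] 𝕜).smulRight v := rfl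
  rw [this, LinearMap.trace_smulRight]
  rfl

theorem ContinuousLinearMap.trace_conj {A B : V →L[𝕜] V} (hBA : B ∘L A = .id 𝕜 V)
    (W : V →L[𝕜] V) : LinearMap.trace 𝕜 V (A ∘L W ∘L B) = LinearMap.trace 𝕜 V W := by
  rw [toLinearMap_comp, LinearMap.trace_comp_comm', ← toLinearMap_comp, comp_assoc, hBA, comp_id]

variable [CompleteSpace 𝕜]

variable (𝕜 V) in
noncomputable def traceCLM : (V →L[𝕜] V) →L[𝕜] 𝕜 :=
  LinearMap.toContinuousLinearMap ((LinearMap.trace 𝕜 V).comp (coeLM 𝕜))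

@[simp]
theorem traceCLM_apply (T : V →L[𝕜] V) : traceCLM 𝕜 V T = LinearMap.trace 𝕜 V T := rfl

theorem hasFDerivAt_linearMap_det {A B : V →L[𝕜] V} (hBA : B ∘L A = .id 𝕜 V) :
    HasFDerivAt (fun T : V →L[𝕜] V => LinearMap.det (T : V →ₗ[𝕜] V))
      (LinearMap.det (A : V →ₗ[𝕜] V) • (traceCLM 𝕜 V ∘L compL 𝕜 V V V B)) A := by
  let b := Module.finBasis 𝕜 V
  let M : (V →L[𝕜] V) → Matrix _ _ 𝕜 := fun T => LinearMap.toMatrix b b T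
  let entry : _ → _ → (V →L[𝕜] V) →L[𝕜] 𝕜 := fun i j =>
    LinearMap.toContinuousLinearMap (b.coord i) ∘L apply 𝕜 V (b j)
  have hM : ∀ i j, HasFDerivAt (fun T => M T i j) (entry i j) A := fun i j => by
    convert (entry i j).hasFDerivAt using 1
    ext T; simp [M, entry, LinearMap.toMatrix_apply]
  have hMB : M B * M A = 1 := by
    rw [← LinearMap.toMatrix_comp, ← toLinearMap_comp, hBA]
    exact LinearMap.toMatrix_id b
  have hdet := Matrix.hasFDerivAt_det hM
  simp only [M, LinearMap.det_toMatrix] at hdet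
  refine hdet.congr_fderiv (ContinuousLinearMap.ext fun H => ?_)
  have hentry : ∀ i j, entry i j H = M H i j := fun i j => by
    simp [entry, M, LinearMap.toMatrix_apply]
  calc _ = ((M A).adjugate * M H).trace := by
        simp only [_root_.sum_apply, _root_.smul_apply, hentry, smul_eq_mul, Matrix.trace,
          Matrix.diag, Matrix.mul_apply]
        exact Finset.sum_comm
    _ = LinearMap.det (A : V →ₗ[𝕜] V) * (M B * M H).trace := by
        rw [Matrix.adjugate_eq_det_smul_of_mul_eq_one hMB, Matrix.smul_mul, Matrix.trace_smul,
          LinearMap.det_toMatrix, smul_eq_mul]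
    _ = _ := by
        simp [M, ← LinearMap.toMatrix_comp, LinearMap.trace_eq_matrix_trace 𝕜 b]

end LinearAlgebra

section Piola

variable {V : Type*} [NormedAddCommGroup V] [NormedSpace ℝ V] [FiniteDimensional ℝ V]

/-- `piola F w x` is the value at `F x` of the Piola transform of the field `w` under `F`. -/
noncomputable def piola (F w : V → V) (x : V) : V :=
  (LinearMap.det (fderiv ℝ F x : V →ₗ[ℝ] V))⁻¹ • fderiv ℝ F x (w x)

theorem trace_fderiv_piola_comp {F w : V → V} {x : V} (hF : ContDiffAt ℝ 2 F x)
    (hw : DifferentiableAt ℝ w x) {B : V →L[ℝ] V} (hB : B ∘L fderiv ℝ F x = .id ℝ V) :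
    DifferentiableAt ℝ (piola F w) x ∧
      LinearMap.trace ℝ V (fderiv ℝ (piola F w) x ∘L B) =
        (LinearMap.det (fderiv ℝ F x : V →ₗ[ℝ] V))⁻¹ * LinearMap.trace ℝ V (fderiv ℝ w x) := by
  have hd := det_ne_zero_of_comp_eq_id hB
  have hA' : HasFDerivAt (fderiv ℝ F) (fderiv ℝ (fderiv ℝ F) x) x :=
    ((hF.fderiv_right (m := 1) (by norm_num)).differentiableAt one_ne_zero).hasFDerivAt
  have hdet := (hasFDerivAt_linearMap_det hB).comp x hA'
  have hP : HasFDerivAt (piola F w) _ x :=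
    ((hasDerivAt_inv hd).comp_hasFDerivAt x hdet).smul (hA'.clm_apply hw.hasFDerivAt)
  refine ⟨hP.differentiableAt, ?_⟩
  rw [hP.fderiv]
  simp only [Function.comp_apply]
  set A := fderiv ℝ F x
  set A' := fderiv ℝ (fderiv ℝ F) x
  set d := LinearMap.det (A : V →ₗ[ℝ] V)
  have hsymm : A'.flip (w x) = A' (w x) :=
    ext fun h => (hF.isSymmSndFDerivAt (by simp) (w x) h).symm
  have hBA_apply (v : V) : B (A v) = v := by rw [← comp_apply, hB, id_apply]
  have hcomm : LinearMap.trace ℝ V (A' (w x) ∘L B) = LinearMap.trace ℝ V (B ∘L A' (w x)) := by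
    rw [toLinearMap_comp, LinearMap.trace_comp_comm', ← toLinearMap_comp]
  simp only [add_comp, smul_comp, comp_assoc, toLinearMap_add, toLinearMap_smul, map_add, map_smul,
    trace_smulRight_comp, trace_conj hB, hsymm, hcomm, hBA_apply, comp_apply, compL_apply,
    traceCLM_apply, _root_.smul_apply, smul_eq_mul]
  field_simp
  ring

theorem trace_fderiv_of_comp_eq_piola {F Finv w u : V → V} {x : V} (hF : ContDiffAt ℝ 2 F x)
    (hFinv : DifferentiableAt ℝ Finv (F x)) (hleft : ∀ᶠ y in 𝓝 x, Finv (F y) = y)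
    (hright : ∀ᶠ z in 𝓝 (F x), F (Finv z) = z) (hw : DifferentiableAt ℝ w x)
    (hu : ∀ᶠ y in 𝓝 x, u (F y) = piola F w y) :
    DifferentiableAt ℝ u (F x) ∧
      LinearMap.trace ℝ V (fderiv ℝ u (F x)) =
        (LinearMap.det (fderiv ℝ F x : V →ₗ[ℝ] V))⁻¹ * LinearMap.trace ℝ V (fderiv ℝ w x) := by
  have hx : Finv (F x) = x := hleft.self_of_nhds
  have hFinv' := hFinv.hasFDerivAt
  have hB : fderiv ℝ Finv (F x) ∘L fderiv ℝ F x = .id ℝ V :=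
    (hFinv'.comp x (hF.differentiableAt two_ne_zero).hasFDerivAt).unique
      ((hasFDerivAt_id x).congr_of_eventuallyEq hleft)
  obtain ⟨hP, htrace⟩ := trace_fderiv_piola_comp hF hw hB
  have hu' : u =ᶠ[𝓝 (F x)] piola F w ∘ Finv := by
    have hFinv_tendsto : Tendsto Finv (𝓝 (F x)) (𝓝 x) := by
      simpa only [hx] using hFinv.continuousAt.tendsto
    filter_upwards [hright, hFinv_tendsto.eventually hu] with z hz hz'
    rw [Function.comp_apply, ← hz', hz]
  have hP' : HasFDerivAt (piola F w) (fderiv ℝ (piola F w) x) (Finv (F x)) := by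
    rw [hx]; exact hP.hasFDerivAt
  have hU := (hP'.comp (F x) hFinv').congr_of_eventuallyEq hu'
  exact ⟨hU.differentiableAt, hU.fderiv ▸ htrace⟩

end Piola

theorem div3_eq_trace_fderiv {w : (Fin 3 → ℝ) → Fin 3 → ℝ} {y : Fin 3 → ℝ}
    (hw : DifferentiableAt ℝ w y) :
    div3 w y = LinearMap.trace ℝ _ (fderiv ℝ w y : (Fin 3 → ℝ) →ₗ[ℝ] Fin 3 → ℝ) := by
  rw [LinearMap.trace_eq_matrix_trace ℝ (Pi.basisFun ℝ (Fin 3)), LinearMap.toMatrix_eq_toMatrix']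
  refine Finset.sum_congr rfl fun i _ => ?_
  rw [pd3, (hasFDerivAt_pi'.mp hw.hasFDerivAt i).fderiv]
  simp [LinearMap.toMatrix'_apply]

theorem stmt7_general (U Ω : Set (Fin 3 → ℝ)) (hU : IsOpen U) (hΩ : IsOpen Ω)
    (F Finv : (Fin 3 → ℝ) → (Fin 3 → ℝ))
    (hF : ContDiffOn ℝ 2 F U) (hFinv : ContDiffOn ℝ 2 Finv Ω)
    (hFmaps : Set.MapsTo F U Ω)
    (hleft : ∀ x ∈ U, Finv (F x) = x) (hright : ∀ y ∈ Ω, F (Finv y) = y)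
    (J : (Fin 3 → ℝ) → Matrix (Fin 3) (Fin 3) ℝ)
    (hJ : ∀ x ∈ U, ∀ i j, J x i j = fderiv ℝ F x (Pi.single j 1) i)
    (uhat : (Fin 3 → ℝ) → (Fin 3 → ℝ)) (huhat : ContDiffOn ℝ 1 uhat U)
    (u : (Fin 3 → ℝ) → (Fin 3 → ℝ))
    (hu : ∀ x ∈ U, u (F x) = (1 / (J x).det) • (J x).mulVec (uhat x)) :
    ∀ x ∈ U, div3 u (F x) = (1 / (J x).det) * div3 uhat x := by
  intro x hx
  have hUx := hU.mem_nhds hx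
  have hΩx := hΩ.mem_nhds (hFmaps hx)
  have hJF : ∀ y ∈ U, J y = LinearMap.toMatrix' (fderiv ℝ F y : _ →ₗ[ℝ] _) := fun y hy =>
    Matrix.ext fun i j => by rw [hJ y hy, LinearMap.toMatrix'_apply]; rfl
  have hpiola : ∀ᶠ y in 𝓝 x, u (F y) = piola F uhat y := by
    filter_upwards [hUx] with y hy
    rw [hu y hy, hJF y hy, LinearMap.det_toMatrix', LinearMap.toMatrix'_mulVec, one_div]
    rfl
  have hw := (huhat.contDiffAt hUx).differentiableAt one_ne_zero
  obtain ⟨hud, htrace⟩ := trace_fderiv_of_comp_eq_piola (hF.contDiffAt hUx)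
    ((hFinv.contDiffAt hΩx).differentiableAt two_ne_zero) (eventually_of_mem hUx hleft)
    (eventually_of_mem hΩx hright) hw hpiola
  rw [div3_eq_trace_fderiv hud, div3_eq_trace_fderiv hw, htrace, hJF x hx,
    LinearMap.det_toMatrix', one_div]

/-- Transformation of the divergence under a C² diffeomorphism `F`:
if `u(F(x)) = (1/det J(x)) J(x) û(x)` then `(∇·u)(F(x)) = (1/det J(x)) (∇·û)(x)`. -/
theorem stmt7 (U Ω : Set (Fin 3 → ℝ)) (hU : IsOpen U) (hΩ : IsOpen Ω)
    (F Finv : (Fin 3 → ℝ) → (Fin 3 → ℝ))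
    (hF : ContDiffOn ℝ 2 F U) (hFinv : ContDiffOn ℝ 2 Finv Ω)
    (hFmaps : Set.MapsTo F U Ω) (hFinvmaps : Set.MapsTo Finv Ω U)
    (hleft : ∀ x ∈ U, Finv (F x) = x) (hright : ∀ y ∈ Ω, F (Finv y) = y)
    (J : (Fin 3 → ℝ) → Matrix (Fin 3) (Fin 3) ℝ)
    (hJ : ∀ x ∈ U, ∀ i j, J x i j = fderiv ℝ F x (Pi.single j 1) i)
    (hJunit : ∀ x ∈ U, IsUnit (J x))
    (uhat : (Fin 3 → ℝ) → (Fin 3 → ℝ)) (huhat : ContDiffOn ℝ 1 uhat U)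
    (u : (Fin 3 → ℝ) → (Fin 3 → ℝ))
    (hu : ∀ x ∈ U, u (F x) = (1 / (J x).det) • (J x).mulVec (uhat x)) :
    ∀ x ∈ U, div3 u (F x) = (1 / (J x).det) * div3 uhat x :=
  stmt7_general U Ω hU hΩ F Finv hF hFinv hFmaps hleft hright J hJ uhat huhat u hu
end

section
/- Let κ₀ ∈ ℂ with κ₀ ≠ 0, let u : [0,∞) → ℂ be continuous with compact support, and define U(z) = (1/(z−1)) ∫₀^∞ u(ξ) e^{−s(z)ξ} dξ for |z| < 1, where s(z) = iκ₀(z+1)/(z−1). Then U is complex differentiable on the open unit disk and for every z with |z| < 1: ((z−1)²/(2iκ₀)) U'(z) + (1 + (z−1)/(2iκ₀)) U(z) = (1/(z−1)) ∫₀^∞ (1+ξ) u(ξ) e^{−s(z)ξ} dξ. (That is, the operator D defined by the left-hand side satisfies D(MLu) = ML((1+ξ)u).) -/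
/-!
For compactly supported `u` the Laplace transform `Lu` is entire with `(Lu)' = -L(ξu)`:
differentiate under the integral sign, dominating by `|ξ u(ξ)| e^{(|s₀|+1)|ξ|}` near `s₀`.
As `s'(z) = -2iκ₀/(z-1)²`, the chain rule gives
`U' = -(Lu)(s)/(z-1)² + 2iκ₀ L(ξu)(s)/(z-1)³`, and in `D U` the two multiples of `(Lu)(s)`
cancel against `(1 + (z-1)/(2iκ₀)) U`, leaving `(Lu + L(ξu))(s)/(z-1) = ML((1+ξ)u)`.
-/

open MeasureTheory Metric Set Complex

section ExponentialIntegrals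

variable {μ : Measure ℝ} [IsFiniteMeasureOnCompacts μ] {v : ℝ → ℂ}

theorem integrable_mul_cexp_neg_mul (hv : Continuous v) (hvs : HasCompactSupport v) (s : ℂ) :
    Integrable (fun ξ : ℝ => v ξ * cexp (-(s * ξ))) μ :=
  Continuous.integrable_of_hasCompactSupport (by fun_prop) hvs.mul_right

theorem norm_cexp_neg_mul_le {s₀ s : ℂ} (hs : s ∈ ball s₀ 1) (ξ : ℝ) :
    ‖cexp (-(s * ξ))‖ ≤ Real.exp ((‖s₀‖ + 1) * |ξ|) := by
  have hs' : ‖s‖ ≤ ‖s₀‖ + 1 := by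
    have := norm_le_norm_add_norm_sub' s s₀
    rw [mem_ball, dist_eq] at hs
    linarith
  calc ‖cexp (-(s * ξ))‖ ≤ Real.exp ‖-(s * ξ)‖ := norm_exp_le_exp_norm _
    _ ≤ Real.exp ((‖s₀‖ + 1) * |ξ|) := by
      gcongr
      rw [norm_neg, norm_mul, norm_real, Real.norm_eq_abs]
      gcongr

theorem hasDerivAt_integral_mul_cexp_neg_mul (hv : Continuous v) (hvs : HasCompactSupport v)
    (s₀ : ℂ) :
    HasDerivAt (fun s => ∫ ξ, v ξ * cexp (-(s * ξ)) ∂μ)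
      (-∫ ξ, ξ * v ξ * cexp (-(s₀ * ξ)) ∂μ) s₀ := by
  have hbound_int : Integrable (fun ξ : ℝ => ‖ξ * v ξ‖ * Real.exp ((‖s₀‖ + 1) * |ξ|)) μ :=
    Continuous.integrable_of_hasCompactSupport (by fun_prop)
      (hvs.mul_left (f := fun ξ : ℝ => (ξ : ℂ))).norm.mul_right
  have hderiv (s : ℂ) (ξ : ℝ) :
      HasDerivAt (fun s => v ξ * cexp (-(s * ξ))) (-(ξ * v ξ * cexp (-(s * ξ)))) s :=
    ((hasDerivAt_mul_const (ξ : ℂ)).fun_neg.cexp.const_mul (v ξ)).congr_deriv (by ring)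
  rw [← integral_neg]
  refine (hasDerivAt_integral_of_dominated_loc_of_deriv_le (ball_mem_nhds s₀ one_pos)
    (.of_forall fun s => (integrable_mul_cexp_neg_mul hv hvs s).aestronglyMeasurable)
    (integrable_mul_cexp_neg_mul hv hvs s₀) ?_ (.of_forall fun ξ s hs => ?_) hbound_int
    (.of_forall fun ξ s _ => hderiv s ξ)).2
  · exact (Continuous.neg (by fun_prop)).aestronglyMeasurable
  · rw [norm_neg, norm_mul]
    gcongr
    exact norm_cexp_neg_mul_le hs ξ

end ExponentialIntegrals

noncomputable def laplace (v : ℝ → ℂ) (s : ℂ) : ℂ :=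
  ∫ ξ in Ioi (0 : ℝ), v ξ * cexp (-(s * ξ))

section Laplace

variable {v w : ℝ → ℂ}

theorem hasDerivAt_laplace (hv : Continuous v) (hvs : HasCompactSupport v) (s : ℂ) :
    HasDerivAt (laplace v) (-laplace (fun ξ => ξ * v ξ) s) s :=
  hasDerivAt_integral_mul_cexp_neg_mul hv hvs s

theorem laplace_add (hv : Continuous v) (hvs : HasCompactSupport v) (hw : Continuous w)
    (hws : HasCompactSupport w) (s : ℂ) :
    laplace (fun ξ => v ξ + w ξ) s = laplace v s + laplace w s := by
  simp only [laplace, add_mul]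
  exact integral_add (integrable_mul_cexp_neg_mul hv hvs s) (integrable_mul_cexp_neg_mul hw hws s)

end Laplace

noncomputable def mobius (κ₀ z : ℂ) : ℂ :=
  I * κ₀ * (z + 1) / (z - 1)

theorem hasDerivAt_mobius (κ₀ : ℂ) {z : ℂ} (hz : z ≠ 1) :
    HasDerivAt (mobius κ₀) (-2 * I * κ₀ / (z - 1) ^ 2) z := by
  have hz' : z - 1 ≠ 0 := sub_ne_zero.mpr hz
  refine (((hasDerivAt_id' z).add_const 1).const_mul (I * κ₀) |>.div
    ((hasDerivAt_id' z).sub_const 1) hz').congr_deriv ?_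
  field_simp
  ring

noncomputable def laplaceMobius (κ₀ : ℂ) (v : ℝ → ℂ) (z : ℂ) : ℂ :=
  1 / (z - 1) * laplace v (mobius κ₀ z)

section LaplaceMobius

variable {v : ℝ → ℂ} {z : ℂ}

theorem hasDerivAt_laplaceMobius (hv : Continuous v) (hvs : HasCompactSupport v) (κ₀ : ℂ)
    (hz : z ≠ 1) :
    HasDerivAt (laplaceMobius κ₀ v)
      (-laplace v (mobius κ₀ z) / (z - 1) ^ 2
        + 2 * I * κ₀ * laplace (fun ξ => ξ * v ξ) (mobius κ₀ z) / (z - 1) ^ 3) z := by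
  have hz' : z - 1 ≠ 0 := sub_ne_zero.mpr hz
  have hinv := (hasDerivAt_const z (1 : ℂ)).div ((hasDerivAt_id' z).sub_const 1) hz'
  have hL := (hasDerivAt_laplace hv hvs _).comp z (hasDerivAt_mobius κ₀ hz)
  refine (hinv.mul hL).congr_deriv ?_
  simp only [Function.comp_apply, Pi.div_apply]
  field_simp
  ring

theorem laplaceMobius_one_add_mul (hv : Continuous v) (hvs : HasCompactSupport v) {κ₀ : ℂ}
    (hκ : κ₀ ≠ 0) (hz : z ≠ 1) :
    (z - 1) ^ 2 / (2 * I * κ₀) * deriv (laplaceMobius κ₀ v) z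
        + (1 + (z - 1) / (2 * I * κ₀)) * laplaceMobius κ₀ v z
      = laplaceMobius κ₀ (fun ξ => (1 + ξ) * v ξ) z := by
  have hz' : z - 1 ≠ 0 := sub_ne_zero.mpr hz
  have hsplit : (fun ξ : ℝ => (1 + ξ) * v ξ) = fun ξ => v ξ + ξ * v ξ := by
    funext ξ
    ring
  rw [(hasDerivAt_laplaceMobius hv hvs κ₀ hz).deriv, laplaceMobius, laplaceMobius, hsplit,
    laplace_add (w := fun ξ => ξ * v ξ) hv hvs (by fun_prop) hvs.mul_left]
  field_simp
  ring

end LaplaceMobius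

/-- The operator `D` realizes multiplication by `(1+ξ)` under the Laplace–Möbius
transform: `U = MLu` is holomorphic on the unit disk and
`((z−1)²/(2iκ₀)) U' + (1 + (z−1)/(2iκ₀)) U = ML((1+ξ)u)`. -/
theorem stmt11 (κ₀ : ℂ) (hκ : κ₀ ≠ 0) (u : ℝ → ℂ)
    (hu : Continuous u) (hsupp : HasCompactSupport u)
    (s : ℂ → ℂ) (hs : ∀ z, s z = Complex.I * κ₀ * (z + 1) / (z - 1))
    (U : ℂ → ℂ)
    (hU : ∀ z, U z = (1 / (z - 1)) * ∫ ξ in Set.Ioi (0 : ℝ),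
      u ξ * Complex.exp (-(s z * ξ))) :
    DifferentiableOn ℂ U {z : ℂ | ‖z‖ < 1} ∧
    ∀ z : ℂ, ‖z‖ < 1 →
      ((z - 1) ^ 2 / (2 * Complex.I * κ₀)) * deriv U z
          + (1 + (z - 1) / (2 * Complex.I * κ₀)) * U z
        = (1 / (z - 1)) * ∫ ξ in Set.Ioi (0 : ℝ),
            (1 + ξ : ℂ) * u ξ * Complex.exp (-(s z * ξ)) := by
  obtain rfl : s = mobius κ₀ := funext hs
  obtain rfl : U = laplaceMobius κ₀ u := funext hU
  have hz1 {z : ℂ} (hz : ‖z‖ < 1) : z ≠ 1 := by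
    rintro rfl
    simp at hz
  exact ⟨fun z hz =>
      (hasDerivAt_laplaceMobius hu hsupp κ₀ (hz1 hz)).differentiableAt.differentiableWithinAt,
    fun z hz => laplaceMobius_one_add_mul hu hsupp hκ (hz1 hz)⟩
end

section
/- Let κ₀ ∈ ℂ with κ₀ ≠ 0, let u : [0,∞) → ℂ be continuously differentiable with compact support, and define U(z) = (1/(z−1)) ∫₀^∞ u(ξ) e^{−s(z)ξ} dξ for |z| < 1, where s(z) = iκ₀(z+1)/(z−1). Then for every z with |z| < 1: (1/(z−1)) ∫₀^∞ u'(ξ) e^{−s(z)ξ} dξ = ½ ( u(0) + (z+1)·(2iκ₀ U(z) − u(0))/(z−1) ). (That is, writing MLu = (1/(iκ₀)) T₋(u(0), Û) with Û(z) = (2iκ₀ U(z) − u(0))/(z−1), one has ML(∂_ξ u) = T₊(u(0), Û).) -/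
/-!
Integration by parts gives `L(u')(c) = c · L(u)(c) - u(0)` for every `c ∈ ℂ`, the boundary term
at infinity vanishing because `u` has compact support. With `c = s(z)` the claim is then an
identity of rational functions in `z`, valid since `z ≠ 1` inside the unit disk.
-/

open MeasureTheory Set Filter Topology

theorem integral_Ioi_deriv_mul_cexp_neg {u : ℝ → ℂ} (hu : ContDiff ℝ 1 u)
    (hsupp : HasCompactSupport u) (c : ℂ) :
    ∫ ξ in Ioi (0 : ℝ), deriv u ξ * Complex.exp (-(c * ξ))
      = c * (∫ ξ in Ioi (0 : ℝ), u ξ * Complex.exp (-(c * ξ))) - u 0 := by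
  set e : ℝ → ℂ := fun ξ => Complex.exp (-(c * ξ))
  have he : Continuous e := by fun_prop
  have hde (ξ : ℝ) : HasDerivAt e (-c * e ξ) ξ := by
    simpa [e, mul_comm] using ((((hasDerivAt_id (ξ : ℂ)).const_mul c).neg).cexp).comp_ofReal
  have hdu (ξ : ℝ) : HasDerivAt u (deriv u ξ) ξ :=
    (hu.differentiable one_ne_zero ξ).hasDerivAt
  have h_zero : Tendsto (e * u) (𝓝[>] 0) (𝓝 (e 0 * u 0)) :=
    ((he.mul hu.continuous).tendsto 0).mono_left nhdsWithin_le_nhds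
  have h_infty : Tendsto (e * u) atTop (𝓝 0) :=
    hsupp.mul_left.is_zero_at_infty.mono_left atTop_le_cocompact
  have h_int_eu' : IntegrableOn (e * deriv u) (Ioi 0) :=
    ((he.mul (hu.continuous_deriv le_rfl)).integrable_of_hasCompactSupport
      hsupp.deriv.mul_left).integrableOn
  have h_int_e'u : IntegrableOn ((fun ξ => -c * e ξ) * u) (Ioi 0) :=
    (((continuous_const.mul he).mul hu.continuous).integrable_of_hasCompactSupport
      hsupp.mul_left).integrableOn
  have hibp := integral_Ioi_mul_deriv_eq_deriv_mul (fun x _ => hde x) (fun x _ => hdu x)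
    h_int_eu' h_int_e'u h_zero h_infty
  have he0 : e 0 = 1 := by simp [e]
  simp only [he0, one_mul, mul_assoc, integral_const_mul] at hibp
  show ∫ ξ in Ioi 0, deriv u ξ * e ξ = c * (∫ ξ in Ioi 0, u ξ * e ξ) - u 0
  simp only [mul_comm (deriv u _), mul_comm (u _)]
  linear_combination hibp

theorem stmt13_general (κ₀ : ℂ) (u : ℝ → ℂ)
    (hu : ContDiff ℝ 1 u) (hsupp : HasCompactSupport u)
    (s : ℂ → ℂ) (hs : ∀ z, s z = Complex.I * κ₀ * (z + 1) / (z - 1))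
    (U : ℂ → ℂ)
    (hU : ∀ z, U z = (1 / (z - 1)) * ∫ ξ in Set.Ioi (0 : ℝ),
      u ξ * Complex.exp (-(s z * ξ))) :
    ∀ z : ℂ, ‖z‖ < 1 →
      (1 / (z - 1)) * ∫ ξ in Set.Ioi (0 : ℝ), deriv u ξ * Complex.exp (-(s z * ξ))
        = (1 / 2) * (u 0 + (z + 1) * ((2 * Complex.I * κ₀ * U z - u 0) / (z - 1))) := by
  intro z hz
  have hz1 : z - 1 ≠ 0 := sub_ne_zero.2 fun h => by simp [h] at hz
  rw [integral_Ioi_deriv_mul_cexp_neg hu hsupp, hU]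
  generalize ∫ ξ in Ioi (0 : ℝ), u ξ * Complex.exp (-(s z * ξ)) = L
  rw [hs]
  field_simp
  ring

/-- Transformation of the derivative under the Laplace–Möbius transform:
`ML(∂_ξ u)(z) = ½(u(0) + (z+1)·(2iκ₀ U(z) − u(0))/(z−1))`, i.e. writing
`MLu = (1/(iκ₀)) T₋(u(0), Û)` one has `ML(∂_ξ u) = T₊(u(0), Û)`. -/
theorem stmt13 (κ₀ : ℂ) (hκ : κ₀ ≠ 0) (u : ℝ → ℂ)
    (hu : ContDiff ℝ 1 u) (hsupp : HasCompactSupport u)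
    (s : ℂ → ℂ) (hs : ∀ z, s z = Complex.I * κ₀ * (z + 1) / (z - 1))
    (U : ℂ → ℂ)
    (hU : ∀ z, U z = (1 / (z - 1)) * ∫ ξ in Set.Ioi (0 : ℝ),
      u ξ * Complex.exp (-(s z * ξ))) :
    ∀ z : ℂ, ‖z‖ < 1 →
      (1 / (z - 1)) * ∫ ξ in Set.Ioi (0 : ℝ), deriv u ξ * Complex.exp (-(s z * ξ))
        = (1 / 2) * (u 0 + (z + 1) * ((2 * Complex.I * κ₀ * U z - u 0) / (z - 1))) :=
  stmt13_general κ₀ u hu hsupp s hs U hU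
end
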